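/- Let C and D be categories, F an endofunctor on C, G an endofunctor on D, L : D → C left adjoint to R : C → D, and p : F ∘ L ≅ L ∘ G a natural isomorphism. If in_G : G (μG) → μG is an initial G-algebra, then L(in_G) ∘ p_{μG} : F (L (μG)) → L (μG) is an initial F-algebra; in particular F has an initial algebra with carrier L (μG). -/
import Mathlib


open CategoryTheory

universe v₁ v₂ u₁ u₂

variable {C : Type u₁} [Category.{v₁} C] {D : Type u₂} [Category.{v₂} D]

/-- If `L ⊣ R`, `p : F ∘ L ≅ L ⊙ G` ... auxiliary key lemma. -/
theorem initial_algebra_lifted_key (F : C ⥤ C) (G : D ⥤ D) (L : D ⥤ C) (R : C ⥤ D)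
    (adj : L ⊣ R) (p : L ⋙ F ≅ G ⋙ L) (muG : Endofunctor.Algebra G)
    (A : Endofunctor.Algebra F) (f : L.obj muG.a ⟶ A.a) :
    (G.map ((adj.homEquiv _ _) f) ≫
        adj.homEquiv _ _ (p.inv.app (R.obj A.a) ≫ F.map (adj.counit.app A.a) ≫ A.str)
      = muG.str ≫ adj.homEquiv _ _ f)
    ↔ (F.map f ≫ A.str = (p.hom.app muG.a ≫ L.map muG.str) ≫ f) := by
  have h1 : muG.str ≫ (adj.homEquiv _ _) f = adj.homEquiv _ _ (L.map muG.str ≫ f) :=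
    (adj.homEquiv_naturality_left _ _).symm
  have h2 : G.map ((adj.homEquiv _ _) f) ≫
      adj.homEquiv _ _ (p.inv.app (R.obj A.a) ≫ F.map (adj.counit.app A.a) ≫ A.str)
      = adj.homEquiv _ _ (p.inv.app muG.a ≫ F.map f ≫ A.str) := by
    rw [← adj.homEquiv_naturality_left]
    congr 1
    have hp := p.inv.naturality ((adj.homEquiv _ _) f)
    dsimp at hp
    rw [← Category.assoc, hp, Category.assoc, ← F.map_comp_assoc]
    have hlf : L.map ((adj.homEquiv muG.a A.a) f) ≫ adj.counit.app A.a = f := by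
      simp [Adjunction.homEquiv_unit]
    rw [hlf]
  rw [h1, h2, Equiv.apply_eq_iff_eq]
  constructor
  · intro h
    rw [Category.assoc, ← h, Iso.hom_inv_id_app_assoc]
  · intro h
    rw [h, Category.assoc, Iso.inv_hom_id_app_assoc]

/-- If `L ⊣ R`, `p : F ∘ L ≅ L ∘ G` is a natural isomorphism, and `in_G : G (μG) ⟶ μG` is an
initial `G`-algebra, then `L(in_G) ∘ p_{μG} : F (L (μG)) ⟶ L (μG)` is an initial `F`-algebra;
in particular `F` has an initial algebra with carrier `L (μG)`. -/
theorem initial_algebra_lifted (F : C ⥤ C) (G : D ⥤ D) (L : D ⥤ C) (R : C ⥤ D)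
    (adj : L ⊣ R) (p : L ⋙ F ≅ G ⋙ L)
    (muG : Endofunctor.Algebra G) (hinit : Limits.IsInitial muG) :
    Nonempty (Limits.IsInitial
      ({ a := L.obj muG.a, str := p.hom.app muG.a ≫ L.map muG.str } :
        Endofunctor.Algebra F)) := by
  -- for each `F`-algebra `A`, the associated `G`-algebra on `R.obj A.a`
  let RA : Endofunctor.Algebra F → Endofunctor.Algebra G := fun A =>
    { a := R.obj A.a
      str := adj.homEquiv _ _ (p.inv.app (R.obj A.a) ≫ F.map (adj.counit.app A.a) ≫ A.str) }
  refine ⟨Limits.IsInitial.ofUniqueHom (fun A => ?_) (fun A m => ?_)⟩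
  · refine ⟨(adj.homEquiv _ _).symm (hinit.to (RA A)).f, ?_⟩
    have := (initial_algebra_lifted_key F G L R adj p muG A
      ((adj.homEquiv _ _).symm (hinit.to (RA A)).f)).mp
    rw [Equiv.apply_symm_apply] at this
    exact this (hinit.to (RA A)).h
  · -- uniqueness
    have hm : G.map ((adj.homEquiv _ _) m.f) ≫ (RA A).str
        = muG.str ≫ (adj.homEquiv _ _) m.f :=
      (initial_algebra_lifted_key F G L R adj p muG A m.f).mpr m.h
    have : (⟨(adj.homEquiv _ _) m.f, hm⟩ : muG ⟶ RA A) = hinit.to (RA A) :=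
      hinit.hom_ext _ _
    have hf : (adj.homEquiv _ _) m.f = (hinit.to (RA A)).f :=
      congrArg Endofunctor.Algebra.Hom.f this
    apply Endofunctor.Algebra.Hom.ext
    dsimp
    rw [← hf, Equiv.symm_apply_apply]
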